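/- arXiv:1602.02352 — 5 statements merged into one kernel-verified Lean document; each statement's English description precedes it below -/
import Mathlib

section
/- Let s, n be natural numbers, let Ω ⊂ ℝ^s be a finite set, let f_ω ∈ ℝ for ω ∈ Ω, and define f : ℝ^s → ℝ by f(x) = Σ_{ω∈Ω} f_ω e^{ω·x} and z_ω := (e^{ω_1}, …, e^{ω_s}) ∈ ℝ^s. If p is a polynomial in s real variables of total degree at most n with p(z_ω) = 0 for all ω ∈ Ω, then for every multi-index α ∈ ℕ^s with |α| ≤ n one has Σ_{β∈ℕ^s, |β|≤n} f(α+β) · p_β = 0. -/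
open MvPolynomial

/-- The finite set of multi-indices `β : Fin s → ℕ` with `|β| = β 1 + ⋯ + β s ≤ n`. -/
def degLE (s n : ℕ) : Finset (Fin s → ℕ) :=
  (Fintype.piFinset fun _ : Fin s => Finset.range (n + 1)).filter fun β => (∑ i, β i) ≤ n

lemma eval_eq_degLE_sum (s n : ℕ) (p : MvPolynomial (Fin s) ℝ) (hp : p.totalDegree ≤ n)
    (x : Fin s → ℝ) :
    ∑ β ∈ degLE s n, coeff (Finsupp.equivFunOnFinite.symm β) p * ∏ i, x i ^ β i = eval x p := by
  have hsub : p.support.image Finsupp.equivFunOnFinite ⊆ degLE s n := by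
    intro β hβ
    obtain ⟨d, hd, rfl⟩ := Finset.mem_image.mp hβ
    have hsum : ∑ i, d i ≤ n := by
      have := le_trans (MvPolynomial.le_totalDegree hd) hp
      rwa [Finsupp.sum_fintype _ _ (fun _ => rfl)] at this
    simp only [degLE, Finset.mem_filter, Fintype.mem_piFinset, Finset.mem_range]
    refine ⟨fun i => Nat.lt_succ_of_le (le_trans ?_ hsum), hsum⟩
    exact Finset.single_le_sum (f := fun i => d i) (fun _ _ => Nat.zero_le _) (Finset.mem_univ i)
  rw [eval_eq]
  rw [← Finset.sum_subset hsub (by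
    intro β _ hβ
    have : Finsupp.equivFunOnFinite.symm β ∉ p.support := by
      intro h
      exact hβ (Finset.mem_image.mpr ⟨_, h, Finsupp.equivFunOnFinite.apply_symm_apply β⟩)
    rw [MvPolynomial.notMem_support_iff.mp this, zero_mul])]
  rw [Finset.sum_image (fun a _ b _ h => Finsupp.equivFunOnFinite.injective h)]
  simp only [Equiv.symm_apply_apply, Finsupp.equivFunOnFinite_apply]
  refine Finset.sum_congr rfl fun d _ => ?_
  congr 1
  refine (Finset.prod_subset (Finset.subset_univ d.support) fun i _ hi => ?_).symm
  rw [Finsupp.notMem_support_iff.mp hi, pow_zero]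

/-- Lemma 1, Ideal ⇒ Zero: if `p` has total degree at most `n` and vanishes at
all points `z_ω`, then `Σ_{|β|≤n} f(α+β) p_β = 0` for all `|α| ≤ n`. -/
theorem prony_ideal_implies_zero (s n : ℕ) (Ω : Finset (Fin s → ℝ))
    (fc : (Fin s → ℝ) → ℝ) (f : (Fin s → ℝ) → ℝ)
    (hf : ∀ x, f x = ∑ ω ∈ Ω, fc ω * Real.exp (∑ i, ω i * x i))
    (z : (Fin s → ℝ) → Fin s → ℝ)
    (hz : ∀ ω i, z ω i = Real.exp (ω i))
    (p : MvPolynomial (Fin s) ℝ) (hp : p.totalDegree ≤ n)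
    (hpz : ∀ ω ∈ Ω, eval (z ω) p = 0)
    (α : Fin s → ℕ) (hα : (∑ i, α i) ≤ n) :
    ∑ β ∈ degLE s n,
        f (fun i => (α i : ℝ) + (β i : ℝ)) * coeff (Finsupp.equivFunOnFinite.symm β) p = 0 := by
  have step : ∀ β ∈ degLE s n,
      f (fun i => (α i : ℝ) + (β i : ℝ)) * coeff (Finsupp.equivFunOnFinite.symm β) p
        = ∑ ω ∈ Ω, (fc ω * Real.exp (∑ i, ω i * (α i : ℝ))) *
            (coeff (Finsupp.equivFunOnFinite.symm β) p * ∏ i, z ω i ^ β i) := by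
    intro β _
    rw [hf, Finset.sum_mul]
    refine Finset.sum_congr rfl fun ω _ => ?_
    have h1 : Real.exp (∑ i, ω i * ((α i : ℝ) + (β i : ℝ)))
        = Real.exp (∑ i, ω i * (α i : ℝ)) * ∏ i, z ω i ^ β i := by
      have : ∑ i, ω i * ((α i : ℝ) + (β i : ℝ))
          = (∑ i, ω i * (α i : ℝ)) + ∑ i, ω i * (β i : ℝ) := by
        rw [← Finset.sum_add_distrib]; exact Finset.sum_congr rfl fun i _ => by ring
      rw [this, Real.exp_add]
      congr 1
      rw [Real.exp_sum]
      refine Finset.prod_congr rfl fun i _ => ?_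
      rw [hz, ← Real.exp_nat_mul]
      ring_nf
    rw [h1]; ring
  rw [Finset.sum_congr rfl step, Finset.sum_comm]
  refine Finset.sum_eq_zero fun ω hω => ?_
  rw [← Finset.mul_sum, eval_eq_degLE_sum s n p hp (z ω), hpz ω hω, mul_zero]
end

section
/- Let s, n be natural numbers, let Ω ⊂ ℝ^s be a finite set, let f_ω ∈ ℝ for ω ∈ Ω, define f(x) = Σ_{ω∈Ω} f_ω e^{ω·x}, z_ω := (e^{ω_1}, …, e^{ω_s}), and let F_n be the ℝ-linear map sending a polynomial p of total degree at most n to the vector (Σ_{|β|≤n} f(α+β) p_β)_{α∈ℕ^s, |α|≤n}. Then the dimension of the kernel of F_n is at least the dimension of the space of polynomials of total degree at most n that vanish at z_ω for every ω ∈ Ω. -/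
open MvPolynomial

set_option maxHeartbeats 1000000
set_option synthInstance.maxHeartbeats 1000000

lemma eval_eq_sum_degLE {s n : ℕ} (q : MvPolynomial (Fin s) ℝ)
    (hq : q ∈ restrictTotalDegree (Fin s) ℝ n) (x : Fin s → ℝ) :
    eval x q = ∑ β ∈ degLE s n,
      coeff (Finsupp.equivFunOnFinite.symm β) q * ∏ i, x i ^ β i := by
  have h1 : ∑ β ∈ degLE s n, coeff (Finsupp.equivFunOnFinite.symm β) q * ∏ i, x i ^ β i
      = ∑ d ∈ (degLE s n).image ⇑Finsupp.equivFunOnFinite.symm, coeff d q * ∏ i, x i ^ d i := by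
    rw [Finset.sum_image (fun _ _ _ _ h => Finsupp.equivFunOnFinite.symm.injective h)]
    exact Finset.sum_congr rfl fun β _ => by simp
  rw [eval_eq', h1]
  apply Finset.sum_subset
  · intro d hd
    have hsum : ∑ i, d i ≤ n := by
      have h1 : (d.sum fun _ e => e) ≤ q.totalDegree :=
        Finset.le_sup (f := fun d : Fin s →₀ ℕ => d.sum fun _ e => e) hd
      have h2 : q.totalDegree ≤ n := (mem_restrictTotalDegree _ _ _).mp hq
      have h3 : (d.sum fun _ e => e) = ∑ i, d i := Finsupp.sum_fintype _ _ (fun _ => rfl)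
      omega
    refine Finset.mem_image.mpr ⟨Finsupp.equivFunOnFinite d, ?_, by simp⟩
    rw [degLE, Finset.mem_filter]
    refine ⟨Fintype.mem_piFinset.mpr fun i => Finset.mem_range.mpr ?_, by simpa using hsum⟩
    have : d i ≤ ∑ j, d j := Finset.single_le_sum (fun _ _ => Nat.zero_le _) (Finset.mem_univ i)
    simp only [Finsupp.equivFunOnFinite_apply]
    omega
  · intro d _ hd
    rw [MvPolynomial.notMem_support_iff.mp hd, zero_mul]

/-- Corollary 1: `dim ker F_n ≥ dim (I_Ω ∩ Π_n)`, where `F_n` is the linear map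
sending `p ∈ Π_n` to the vector `(Σ_{|β|≤n} f(α+β) p_β)_{|α|≤n}`. -/
theorem prony_kernel_dim_ge (s n : ℕ) (Ω : Finset (Fin s → ℝ))
    (fc : (Fin s → ℝ) → ℝ) (f : (Fin s → ℝ) → ℝ)
    (hf : ∀ x, f x = ∑ ω ∈ Ω, fc ω * Real.exp (∑ i, ω i * x i))
    (z : (Fin s → ℝ) → Fin s → ℝ)
    (hz : ∀ ω i, z ω i = Real.exp (ω i))
    (F : restrictTotalDegree (Fin s) ℝ n →ₗ[ℝ] ({α // α ∈ degLE s n} → ℝ))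
    (hF : ∀ p (α : {α // α ∈ degLE s n}),
      F p α = ∑ β ∈ degLE s n,
        f (fun i => (α.1 i : ℝ) + (β i : ℝ)) *
          coeff (Finsupp.equivFunOnFinite.symm β) (p : MvPolynomial (Fin s) ℝ)) :
    Module.finrank ℝ (LinearMap.ker F)
      ≥ Module.finrank ℝ
          ↥(restrictTotalDegree (Fin s) ℝ n ⊓
              ⨅ ω ∈ Ω, LinearMap.ker (aeval (z ω) : MvPolynomial (Fin s) ℝ →ₐ[ℝ] ℝ).toLinearMap) := by
  have hKR : (restrictTotalDegree (Fin s) ℝ n ⊓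
        ⨅ ω ∈ Ω, LinearMap.ker (aeval (z ω) : MvPolynomial (Fin s) ℝ →ₐ[ℝ] ℝ).toLinearMap)
      ≤ restrictTotalDegree (Fin s) ℝ n := inf_le_left
  have e : Module.finrank ℝ
        ↥(Submodule.comap (restrictTotalDegree (Fin s) ℝ n).subtype
          (restrictTotalDegree (Fin s) ℝ n ⊓
            ⨅ ω ∈ Ω, LinearMap.ker (aeval (z ω) : MvPolynomial (Fin s) ℝ →ₐ[ℝ] ℝ).toLinearMap))
      = Module.finrank ℝ
        ↥(restrictTotalDegree (Fin s) ℝ n ⊓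
            ⨅ ω ∈ Ω, LinearMap.ker (aeval (z ω) : MvPolynomial (Fin s) ℝ →ₐ[ℝ] ℝ).toLinearMap) :=
    LinearEquiv.finrank_eq (Submodule.comapSubtypeEquivOfLe hKR)
  rw [ge_iff_le, ← e]
  apply Submodule.finrank_mono
  intro p hp
  rw [Submodule.mem_comap, Submodule.mem_inf] at hp
  obtain ⟨hp1, hp2⟩ := hp
  simp only [Submodule.mem_iInf, LinearMap.mem_ker, Submodule.coe_subtype] at hp1 hp2
  have heval : ∀ ω ∈ Ω, eval (z ω) (p : MvPolynomial (Fin s) ℝ) = 0 := by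
    intro ω hω
    have := hp2 ω hω
    rw [AlgHom.toLinearMap_apply, aeval_def, Algebra.algebraMap_self] at this
    exact this
  rw [LinearMap.mem_ker]
  funext α
  rw [hF]
  have key : ∀ β ∈ degLE s n,
      f (fun i => (α.1 i : ℝ) + (β i : ℝ)) *
          coeff (Finsupp.equivFunOnFinite.symm β) (p : MvPolynomial (Fin s) ℝ)
        = ∑ ω ∈ Ω, (fc ω * Real.exp (∑ i, ω i * (α.1 i : ℝ))) *
            (coeff (Finsupp.equivFunOnFinite.symm β) (p : MvPolynomial (Fin s) ℝ)
              * ∏ i, z ω i ^ β i) := by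
    intro β _
    rw [hf, Finset.sum_mul]
    refine Finset.sum_congr rfl fun ω _ => ?_
    have hexp : Real.exp (∑ i, ω i * ((α.1 i : ℝ) + (β i : ℝ)))
        = Real.exp (∑ i, ω i * (α.1 i : ℝ)) * ∏ i, z ω i ^ β i := by
      have hsplit : ∑ i, ω i * ((α.1 i : ℝ) + (β i : ℝ))
          = (∑ i, ω i * (α.1 i : ℝ)) + ∑ i, ω i * (β i : ℝ) := by
        rw [← Finset.sum_add_distrib]; exact Finset.sum_congr rfl fun i _ => by ring
      rw [hsplit, Real.exp_add]
      congr 1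
      rw [Real.exp_sum]
      refine Finset.prod_congr rfl fun i _ => ?_
      rw [hz, mul_comm, Real.exp_nat_mul]
    rw [hexp]; ring
  rw [Finset.sum_congr rfl key, Finset.sum_comm]
  simp only [← Finset.mul_sum]
  have hzero : ∀ ω ∈ Ω, ∑ β ∈ degLE s n,
      coeff (Finsupp.equivFunOnFinite.symm β) (p : MvPolynomial (Fin s) ℝ)
        * ∏ i, z ω i ^ β i = 0 := fun ω hω => by
    rw [← eval_eq_sum_degLE (p : MvPolynomial (Fin s) ℝ) hp1 (z ω), heval ω hω]
  rw [Finset.sum_congr rfl fun ω hω => by rw [hzero ω hω, mul_zero]]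
  simp
end

section
/- Let ω_1, …, ω_M be pairwise distinct points in ℝ^s and let c_1, …, c_M ∈ ℝ. If Σ_{i=1}^M c_i e^{ω_i·α} = 0 for every multi-index α ∈ ℕ^s with |α| ≤ M−1, then c_1 = ⋯ = c_M = 0. In other words, the functions α ↦ e^{ω_i·α} restricted to the lattice simplex {α ∈ ℕ^s : |α| ≤ M−1} are linearly independent over ℝ. -/
open MvPolynomial

/-- the exponential functions `α ↦ e^{ω_i·α}` with pairwise distinct `ω_i` are
linearly independent on the lattice simplex `{α ∈ ℕ^s : |α| ≤ M−1}`. -/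
theorem exp_linear_independence_on_simplex (s M : ℕ) (ω : Fin M → (Fin s → ℝ))
    (hω : Function.Injective ω) (c : Fin M → ℝ)
    (h : ∀ α : Fin s → ℕ, (∑ i, α i) ≤ M - 1 →
      ∑ i, c i * Real.exp (∑ t, ω i t * (α t : ℝ)) = 0) :
    ∀ i, c i = 0 := by
  set x : Fin M → Fin s → ℝ := fun i t => Real.exp (ω i t) with hx
  have hxinj : Function.Injective x := by
    intro i j hij
    apply hω
    funext t
    exact Real.exp_injective (congrFun hij t)
  have hxeval : ∀ i (α : Fin s →₀ ℕ),
      (∏ t, x i t ^ α t) = Real.exp (∑ t, ω i t * (α t : ℝ)) := by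
    intro i α
    rw [Real.exp_sum]
    congr 1
    funext t
    rw [mul_comm, Real.exp_nat_mul]
  have key : ∀ p : MvPolynomial (Fin s) ℝ, p.totalDegree ≤ M - 1 →
      ∑ i, c i * MvPolynomial.eval (x i) p = 0 := by
    intro p hp
    have : ∀ i, c i * MvPolynomial.eval (x i) p =
        ∑ α ∈ p.support, c i * (coeff α p * Real.exp (∑ t, ω i t * (α t : ℝ))) := by
      intro i
      rw [← Finset.mul_sum]
      congr 1
      rw [MvPolynomial.eval_eq']
      exact Finset.sum_congr rfl fun α _ => by rw [hxeval]
    simp_rw [this]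
    rw [Finset.sum_comm]
    apply Finset.sum_eq_zero
    intro α hα
    have hdeg : (∑ t, (α : Fin s → ℕ) t) ≤ M - 1 := by
      calc (∑ t, (α : Fin s → ℕ) t) = α.sum fun _ n => n :=
            (Finsupp.sum_fintype α (fun _ n => n) fun _ => rfl).symm
        _ ≤ p.totalDegree := MvPolynomial.le_totalDegree hα
        _ ≤ M - 1 := hp
    have h0 := h (fun t => α t) hdeg
    calc ∑ i, c i * (coeff α p * Real.exp (∑ t, ω i t * (α t : ℝ)))
        = coeff α p * ∑ i, c i * Real.exp (∑ t, ω i t * (α t : ℝ)) := by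
          rw [Finset.mul_sum]; exact Finset.sum_congr rfl fun i _ => by ring
      _ = 0 := by rw [h0, mul_zero]
  intro i₀
  set q : MvPolynomial (Fin s) ℝ :=
    ∏ j ∈ Finset.univ.erase i₀,
      (C (∑ t, (x j t - x i₀ t) * x j t) - ∑ t, C (x j t - x i₀ t) * X t) with hq
  have hqdeg : q.totalDegree ≤ M - 1 := by
    calc q.totalDegree ≤ ∑ j ∈ Finset.univ.erase i₀,
        (C (∑ t, (x j t - x i₀ t) * x j t) - ∑ t, (C (x j t - x i₀ t) * X t : MvPolynomial (Fin s) ℝ)).totalDegree :=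
          MvPolynomial.totalDegree_finset_prod _ _
      _ ≤ ∑ j ∈ Finset.univ.erase i₀, 1 := by
          apply Finset.sum_le_sum
          intro j _
          apply le_trans (MvPolynomial.totalDegree_sub _ _)
          apply max_le
          · exact le_of_eq_of_le (MvPolynomial.totalDegree_C _) (Nat.zero_le 1)
          · apply le_trans (MvPolynomial.totalDegree_finset_sum _ _)
            apply Finset.sup_le
            intro t _
            apply le_trans (MvPolynomial.totalDegree_mul _ _)
            rw [MvPolynomial.totalDegree_C, MvPolynomial.totalDegree_X]
      _ = M - 1 := by simp [Finset.card_erase_of_mem]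
  have hqeval : ∀ k, MvPolynomial.eval (x k) q =
      ∏ j ∈ Finset.univ.erase i₀, (∑ t, (x j t - x i₀ t) * (x j t - x k t)) := by
    intro k
    rw [hq, map_prod]
    apply Finset.prod_congr rfl
    intro j _
    simp [Finset.mul_sum, Finset.sum_sub_distrib, mul_sub]
  have hq0 : ∀ k, k ≠ i₀ → MvPolynomial.eval (x k) q = 0 := by
    intro k hk
    rw [hqeval]
    apply Finset.prod_eq_zero (Finset.mem_erase.mpr ⟨hk, Finset.mem_univ k⟩)
    simp
  have hqpos : 0 < MvPolynomial.eval (x i₀) q := by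
    rw [hqeval]
    apply Finset.prod_pos
    intro j hj
    have hne : x j ≠ x i₀ := fun hcontra =>
      (Finset.mem_erase.mp hj).1 (hxinj hcontra)
    have : (∑ t, (x j t - x i₀ t) * (x j t - x i₀ t)) ≠ 0 := by
      intro hzero
      apply hne
      funext t
      have hall := (Finset.sum_eq_zero_iff_of_nonneg
        (fun t _ => mul_self_nonneg (x j t - x i₀ t))).mp hzero t (Finset.mem_univ t)
      have := mul_self_eq_zero.mp hall
      linarith
    have hnn : 0 ≤ ∑ t, (x j t - x i₀ t) * (x j t - x i₀ t) :=
      Finset.sum_nonneg fun t _ => mul_self_nonneg _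
    exact lt_of_le_of_ne hnn (Ne.symm this)
  have hsum := key q hqdeg
  rw [Finset.sum_eq_single i₀ (fun k _ hk => by rw [hq0 k hk, mul_zero])
    (fun h => absurd (Finset.mem_univ i₀) h)] at hsum
  exact (mul_eq_zero.mp hsum).resolve_right (ne_of_gt hqpos)
end

section
/- Let Ω, Ω' ⊂ ℝ^s be finite sets and let f_ω ∈ ℝ∖{0} for ω ∈ Ω and g_{ω'} ∈ ℝ∖{0} for ω' ∈ Ω'. If Σ_{ω∈Ω} f_ω e^{ω·α} = Σ_{ω'∈Ω'} g_{ω'} e^{ω'·α} holds for every multi-index α ∈ ℕ^s with |α| ≤ card Ω + card Ω' − 1, then Ω = Ω' and f_ω = g_ω for every ω ∈ Ω. In other words, a multivariate exponential sum with pairwise distinct real frequencies and nonzero coefficients is uniquely determined by its samples on the lattice simplex {α ∈ ℕ^s : |α| ≤ card Ω + card Ω' − 1}. -/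
open Finset

/-- Key lemma (Prony identifiability of a single exponential sum): if a signed exponential
sum over a finite frequency set `T` vanishes on the lattice simplex of size `n - 1` with
`T.card ≤ n`, then all coefficients vanish. -/
private lemma prony_key (s n : ℕ) (T : Finset (Fin s → ℝ)) (hT : T.card ≤ n)
    (c : (Fin s → ℝ) → ℝ)
    (h : ∀ α : Fin s → ℕ, (∑ i, α i) ≤ n - 1 →
      ∑ ν ∈ T, c ν * Real.exp (∑ i, ν i * (α i : ℝ)) = 0) :
    ∀ ν ∈ T, c ν = 0 := by
  intro ω₀ hω₀
  by_cases hs : Nonempty (Fin s)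
  case neg =>
    haveI : IsEmpty (Fin s) := not_nonempty_iff.mp hs
    haveI hsub : Subsingleton (Fin s → ℝ) :=
      ⟨fun a b => funext fun j => absurd ⟨j⟩ hs⟩
    have hTeq : T = {ω₀} :=
      Finset.eq_singleton_iff_unique_mem.mpr ⟨hω₀, fun x _ => Subsingleton.elim x ω₀⟩
    have h0 := h (fun _ => 0) (by simp)
    rw [hTeq] at h0
    simpa using h0
  case pos =>
    haveI := hs
    -- choose a separating coordinate for each ω ≠ ω₀
    have hex : ∀ ω ∈ T.erase ω₀, ∃ j, ω₀ j ≠ ω j := by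
      intro ω hω
      have hne : ω ≠ ω₀ := (Finset.mem_erase.mp hω).1
      by_contra hc
      push_neg at hc
      exact hne (funext fun j => (hc j).symm)
    classical
    set i : (Fin s → ℝ) → Fin s :=
      fun ω => if hj : ∃ j, ω₀ j ≠ ω j then hj.choose else Classical.arbitrary _ with hi_def
    have hi : ∀ ω ∈ T.erase ω₀, ω₀ (i ω) ≠ ω (i ω) := by
      intro ω hω
      have hj := hex ω hω
      simp only [hi_def, dif_pos hj]
      exact hj.choose_spec
    -- the shifted sums vanish
    have claim : ∀ R : Finset (Fin s → ℝ), R ⊆ T.erase ω₀ →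
        ∀ α : Fin s → ℕ, (∑ j, α j) + R.card ≤ n - 1 →
        ∑ ν ∈ T, (c ν * ∏ ω ∈ R, (Real.exp (ν (i ω)) - Real.exp (ω (i ω)))) *
          Real.exp (∑ j, ν j * (α j : ℝ)) = 0 := by
      intro R
      induction R using Finset.induction_on with
      | empty =>
        intro _ α hα
        simpa using h α (by simpa using hα)
      | @insert ω R hωR ih =>
        intro hsub α hα
        have hRsub : R ⊆ T.erase ω₀ := (Finset.insert_subset_iff.mp hsub).2
        set β : Fin s → ℕ := fun j => α j + if j = i ω then 1 else 0 with hβ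
        have hβsum : (∑ j, β j) = (∑ j, α j) + 1 := by
          simp [hβ, Finset.sum_add_distrib]
        have hcard : (insert ω R).card = R.card + 1 := Finset.card_insert_of_notMem hωR
        have h1 : ∑ ν ∈ T, (c ν * ∏ ω' ∈ R, (Real.exp (ν (i ω')) - Real.exp (ω' (i ω')))) *
            Real.exp (∑ j, ν j * (β j : ℝ)) = 0 := by
          apply ih hRsub
          omega
        have h2 : ∑ ν ∈ T, (c ν * ∏ ω' ∈ R, (Real.exp (ν (i ω')) - Real.exp (ω' (i ω')))) *
            Real.exp (∑ j, ν j * (α j : ℝ)) = 0 := by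
          apply ih hRsub
          omega
        have hexpβ : ∀ ν : Fin s → ℝ, Real.exp (∑ j, ν j * (β j : ℝ)) =
            Real.exp (ν (i ω)) * Real.exp (∑ j, ν j * (α j : ℝ)) := by
          intro ν
          rw [← Real.exp_add]
          congr 1
          have : (∑ j, ν j * (β j : ℝ)) =
              ∑ j, (ν j * (α j : ℝ) + ν j * (if j = i ω then 1 else 0)) := by
            apply Finset.sum_congr rfl
            intro j _
            simp only [hβ]
            push_cast
            ring
          rw [this, Finset.sum_add_distrib]
          simp [mul_ite, add_comm]
        calc ∑ ν ∈ T, (c ν * ∏ ω' ∈ insert ω R,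
                (Real.exp (ν (i ω')) - Real.exp (ω' (i ω')))) *
              Real.exp (∑ j, ν j * (α j : ℝ))
            = ∑ ν ∈ T,
              ((c ν * ∏ ω' ∈ R, (Real.exp (ν (i ω')) - Real.exp (ω' (i ω')))) *
                Real.exp (∑ j, ν j * (β j : ℝ)) -
               Real.exp (ω (i ω)) *
                ((c ν * ∏ ω' ∈ R, (Real.exp (ν (i ω')) - Real.exp (ω' (i ω')))) *
                  Real.exp (∑ j, ν j * (α j : ℝ)))) := by
              apply Finset.sum_congr rfl
              intro ν _
              rw [Finset.prod_insert hωR, hexpβ ν]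
              ring
          _ = 0 := by
              rw [Finset.sum_sub_distrib, h1, ← Finset.mul_sum, h2, mul_zero, sub_zero]
    -- apply with R = T.erase ω₀ and α = 0
    have hcard : (T.erase ω₀).card = T.card - 1 := Finset.card_erase_of_mem hω₀
    have hTpos : 1 ≤ T.card := Finset.card_pos.mpr ⟨ω₀, hω₀⟩
    have hfin := claim (T.erase ω₀) (Finset.Subset.refl _) (fun _ => 0) (by simp; omega)
    -- all terms with ν ≠ ω₀ vanish
    have hvanish : ∀ ν ∈ T, ν ≠ ω₀ →
        (c ν * ∏ ω ∈ T.erase ω₀, (Real.exp (ν (i ω)) - Real.exp (ω (i ω)))) *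
          Real.exp (∑ j, ν j * ((0 : ℕ) : ℝ)) = 0 := by
      intro ν hν hνne
      have : (∏ ω ∈ T.erase ω₀, (Real.exp (ν (i ω)) - Real.exp (ω (i ω)))) = 0 :=
        Finset.prod_eq_zero (Finset.mem_erase.mpr ⟨hνne, hν⟩) (by ring)
      rw [this, mul_zero, zero_mul]
    rw [← Finset.add_sum_erase _ _ hω₀] at hfin
    rw [Finset.sum_eq_zero (fun ν hν => hvanish ν (Finset.mem_of_mem_erase hν)
      (Finset.mem_erase.mp hν).1), add_zero] at hfin
    have hprod : (∏ ω ∈ T.erase ω₀, (Real.exp (ω₀ (i ω)) - Real.exp (ω (i ω)))) ≠ 0 := by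
      apply Finset.prod_ne_zero_iff.mpr
      intro ω hω
      have := hi ω hω
      intro hzero
      exact this (Real.exp_injective (by linarith))
    have hexp0 : Real.exp (∑ j, ω₀ j * ((0 : ℕ) : ℝ)) ≠ 0 := Real.exp_ne_zero _
    by_contra hc0
    exact mul_ne_zero (mul_ne_zero hc0 hprod) hexp0 hfin

/-- identifiability: a multivariate exponential sum with pairwise distinct real
frequencies and nonzero coefficients is uniquely determined by its samples on the lattice
simplex `{α ∈ ℕ^s : |α| ≤ #Ω + #Ω' − 1}`. -/
theorem exponential_sum_identifiability (s : ℕ) (Ω Ω' : Finset (Fin s → ℝ))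
    (f g : (Fin s → ℝ) → ℝ)
    (hf : ∀ ω ∈ Ω, f ω ≠ 0) (hg : ∀ ω ∈ Ω', g ω ≠ 0)
    (h : ∀ α : Fin s → ℕ, (∑ i, α i) ≤ Ω.card + Ω'.card - 1 →
      ∑ ω ∈ Ω, f ω * Real.exp (∑ i, ω i * (α i : ℝ))
        = ∑ ω ∈ Ω', g ω * Real.exp (∑ i, ω i * (α i : ℝ))) :
    Ω = Ω' ∧ ∀ ω ∈ Ω, f ω = g ω := by
  classical
  set n := Ω.card + Ω'.card with hn
  set T := Ω ∪ Ω' with hTdef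
  set c : (Fin s → ℝ) → ℝ :=
    fun ν => (if ν ∈ Ω then f ν else 0) - (if ν ∈ Ω' then g ν else 0) with hc
  have hTcard : T.card ≤ n := Finset.card_union_le _ _
  have hmom : ∀ α : Fin s → ℕ, (∑ i, α i) ≤ n - 1 →
      ∑ ν ∈ T, c ν * Real.exp (∑ i, ν i * (α i : ℝ)) = 0 := by
    intro α hα
    have hEq := h α hα
    have step1 : ∑ ν ∈ T, c ν * Real.exp (∑ i, ν i * (α i : ℝ)) =
        ∑ ν ∈ T, ((if ν ∈ Ω then f ν * Real.exp (∑ i, ν i * (α i : ℝ)) else 0) -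
          (if ν ∈ Ω' then g ν * Real.exp (∑ i, ν i * (α i : ℝ)) else 0)) := by
      apply Finset.sum_congr rfl
      intro ν _
      simp only [hc]
      split_ifs <;> ring
    rw [step1, Finset.sum_sub_distrib, Finset.sum_ite_mem, Finset.sum_ite_mem,
      hTdef, Finset.union_inter_cancel_left, Finset.union_inter_cancel_right, hEq, sub_self]
  have hzero := prony_key s n T hTcard c hmom
  have hΩsub : Ω ⊆ Ω' := by
    intro ν hν
    by_contra hν'
    have := hzero ν (Finset.mem_union_left _ hν)
    simp only [hc, if_pos hν, if_neg hν'] at this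
    exact hf ν hν (by linarith)
  have hΩ'sub : Ω' ⊆ Ω := by
    intro ν hν
    by_contra hν'
    have := hzero ν (Finset.mem_union_right _ hν)
    simp only [hc, if_neg hν', if_pos hν] at this
    exact hg ν hν (by linarith)
  have hΩeq : Ω = Ω' := Finset.Subset.antisymm hΩsub hΩ'sub
  refine ⟨hΩeq, fun ν hν => ?_⟩
  have hν' : ν ∈ Ω' := hΩsub hν
  have := hzero ν (Finset.mem_union_left _ hν)
  simp only [hc, if_pos hν, if_pos hν'] at this
  linarith
end

section
/- Let X be an invertible real s×s matrix, let M be a natural number, and let p, q ∈ ℝ[z_1, …, z_s] be polynomials each of whose supports (sets of monomials with nonzero coefficient) has at most M elements. If p(e^{Xβ}) = q(e^{Xβ}) for every multi-index β ∈ ℕ^s with |β| ≤ 2M − 1, where e^{Xβ} := (e^{(Xβ)_1}, …, e^{(Xβ)_s}) and Xβ is the matrix-vector product of X with β regarded as a vector in ℝ^s, then p = q. In other words, a polynomial in s variables with at most M terms is uniquely determined by its values at the points e^{Xβ}, |β| ≤ 2M − 1. -/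
open MvPolynomial

private lemma exp_prod_pow (s : ℕ) (a : Fin s → ℝ) (n : Fin s → ℕ) :
    (∏ i, Real.exp (a i) ^ n i) = Real.exp (∑ i, (n i : ℝ) * a i) := by
  rw [Real.exp_sum]
  exact Finset.prod_congr rfl fun i _ => by rw [← Real.exp_nat_mul]

/-- Key linear independence lemma: distinct points kill coefficients. -/
private lemma key_lemma {s D : ℕ} (A : Finset (Fin s →₀ ℕ)) (x : (Fin s →₀ ℕ) → (Fin s → ℝ))
    (hinj : Set.InjOn x A) (c : (Fin s →₀ ℕ) → ℝ) (hcard : A.card ≤ D + 1)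
    (hvan : ∀ β : Fin s → ℕ, (∑ i, β i) ≤ D →
      ∑ α ∈ A, c α * ∏ i, x α i ^ β i = 0) :
    ∀ α₀ ∈ A, c α₀ = 0 := by
  intro α₀ hα₀
  -- vanishing extends from monomials to all polynomials of total degree ≤ D
  have hpoly : ∀ P : MvPolynomial (Fin s) ℝ, P.totalDegree ≤ D →
      ∑ α ∈ A, c α * eval (x α) P = 0 := by
    intro P hP
    have step : ∑ α ∈ A, c α * eval (x α) P
        = ∑ d ∈ P.support, P.coeff d * ∑ α ∈ A, c α * ∏ i, x α i ^ d i := by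
      calc ∑ α ∈ A, c α * eval (x α) P
          = ∑ α ∈ A, ∑ d ∈ P.support, c α * (P.coeff d * ∏ i, x α i ^ d i) := by
            refine Finset.sum_congr rfl fun α _ => by rw [eval_eq', Finset.mul_sum]
        _ = ∑ d ∈ P.support, ∑ α ∈ A, c α * (P.coeff d * ∏ i, x α i ^ d i) :=
            Finset.sum_comm
        _ = ∑ d ∈ P.support, P.coeff d * ∑ α ∈ A, c α * ∏ i, x α i ^ d i := by
            refine Finset.sum_congr rfl fun d _ => ?_
            rw [Finset.mul_sum]
            exact Finset.sum_congr rfl fun α _ => by ring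
    rw [step]
    refine Finset.sum_eq_zero fun d hd => ?_
    rw [hvan (fun i => d i) ?_, mul_zero]
    calc (∑ i, d i) = d.sum fun _ e => e :=
          (Finsupp.sum_fintype d (fun _ e => e) (fun _ => rfl)).symm
    _ ≤ P.totalDegree := le_totalDegree hd
    _ ≤ D := hP
  -- the separating polynomial
  set L : (Fin s →₀ ℕ) → MvPolynomial (Fin s) ℝ := fun α =>
    (∑ i, C (x α₀ i - x α i) * X i) - C (∑ i, (x α₀ i - x α i) * x α i) with hL
  have hLdeg : ∀ α, (L α).totalDegree ≤ 1 := by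
    intro α
    refine le_trans (totalDegree_sub _ _) (max_le ?_ ?_)
    · refine le_trans (totalDegree_finset_sum _ _) (Finset.sup_le fun i _ => ?_)
      refine le_trans (totalDegree_mul _ _) ?_
      rw [totalDegree_C, totalDegree_X]
    · rw [totalDegree_C]
      exact Nat.zero_le 1
  have hLeval : ∀ α γ, eval (x γ) (L α) = ∑ i, (x α₀ i - x α i) * (x γ i - x α i) := by
    intro α γ
    simp only [hL, map_sub, map_sum, map_mul, eval_C, eval_X, ← Finset.sum_sub_distrib]
    exact Finset.sum_congr rfl fun i _ => by ring
  set P : MvPolynomial (Fin s) ℝ := ∏ α ∈ A.erase α₀, L α with hPdef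
  have hPdeg : P.totalDegree ≤ D := by
    refine le_trans (totalDegree_finset_prod _ _) ?_
    calc ∑ α ∈ A.erase α₀, (L α).totalDegree ≤ ∑ α ∈ A.erase α₀, 1 :=
          Finset.sum_le_sum fun α _ => hLdeg α
      _ = (A.erase α₀).card := by simp
      _ ≤ D := by
          have := Finset.card_erase_of_mem hα₀
          omega
  have hsum := hpoly P hPdeg
  have hzero : ∀ α ∈ A.erase α₀, eval (x α) P = 0 := by
    intro α hα
    rw [hPdef, map_prod]
    refine Finset.prod_eq_zero hα ?_
    rw [hLeval]
    exact Finset.sum_eq_zero fun i _ => by ring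
  rw [← Finset.add_sum_erase A _ hα₀, Finset.sum_eq_zero
    (fun α hα => by rw [hzero α hα, mul_zero]), add_zero] at hsum
  have hPne : eval (x α₀) P ≠ 0 := by
    rw [hPdef, map_prod]
    refine Finset.prod_ne_zero_iff.2 fun α hα => ?_
    rw [hLeval]
    intro hz
    have hne : x α₀ ≠ x α := fun hxe =>
      (Finset.mem_erase.1 hα).1 (hinj hα₀ (Finset.mem_erase.1 hα).2 hxe).symm
    apply hne
    funext i
    have hterm : ∀ i ∈ Finset.univ, (0:ℝ) ≤ (x α₀ i - x α i) * (x α₀ i - x α i) :=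
      fun i _ => mul_self_nonneg _
    have := (Finset.sum_eq_zero_iff_of_nonneg hterm).1 hz i (Finset.mem_univ i)
    nlinarith [this]
  rcases mul_eq_zero.1 hsum with h1 | h2
  · exact h1
  · exact absurd h2 hPne

/-- sparse polynomial reconstruction: a polynomial in `s` variables with at most
`M` terms is uniquely determined by its values at the points `e^{Xβ}`, `|β| ≤ 2M − 1`, where `X`
is an invertible real `s×s` matrix. -/
theorem sparse_polynomial_reconstruction (s M : ℕ) (X : Matrix (Fin s) (Fin s) ℝ)
    (hX : IsUnit X.det) (p q : MvPolynomial (Fin s) ℝ)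
    (hp : p.support.card ≤ M) (hq : q.support.card ≤ M)
    (h : ∀ β : Fin s → ℕ, (∑ i, β i) ≤ 2 * M - 1 →
      eval (fun i => Real.exp (∑ t, X i t * (β t : ℝ))) p
        = eval (fun i => Real.exp (∑ t, X i t * (β t : ℝ))) q) :
    p = q := by
  by_cases hM : M = 0
  · subst hM
    simp only [Nat.le_zero, Finset.card_eq_zero, support_eq_empty] at hp hq
    rw [hp, hq]
  set r := p - q with hr
  rw [← sub_eq_zero, ← hr]
  by_contra hrne
  set x : (Fin s →₀ ℕ) → (Fin s → ℝ) := fun α i => Real.exp (∑ t, X t i * (α t : ℝ)) with hx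
  have hinj : Function.Injective x := by
    intro α α' he
    have hmv : X.transpose.mulVec (fun t => (α t : ℝ)) = X.transpose.mulVec (fun t => (α' t : ℝ)) := by
      funext i
      have := congrFun he i
      simpa [hx, Matrix.mulVec, dotProduct, Matrix.transpose] using Real.exp_injective this
    have hXT : IsUnit X.transpose := by
      rw [Matrix.isUnit_iff_isUnit_det, Matrix.det_transpose]; exact hX
    have := (Matrix.mulVec_injective_iff_isUnit.2 hXT) hmv
    ext t
    exact_mod_cast congrFun this t
  have hvan : ∀ β : Fin s → ℕ, (∑ i, β i) ≤ 2 * M - 1 →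
      ∑ α ∈ r.support, r.coeff α * ∏ i, x α i ^ β i = 0 := by
    intro β hβ
    have h0 : eval (fun i => Real.exp (∑ t, X i t * (β t : ℝ))) r = 0 := by
      rw [hr, map_sub, h β hβ, sub_self]
    rw [eval_eq'] at h0
    rw [← h0]
    refine Finset.sum_congr rfl fun α _ => ?_
    congr 1
    rw [exp_prod_pow, exp_prod_pow]
    congr 1
    simp only [Finset.mul_sum]
    rw [Finset.sum_comm]
    exact Finset.sum_congr rfl fun i _ => Finset.sum_congr rfl fun t _ => by ring
  have hcard : r.support.card ≤ (2 * M - 1) + 1 := by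
    have h1 : r.support ⊆ p.support ∪ q.support := support_sub _ _ _
    have h2 := Finset.card_le_card h1
    have h3 := Finset.card_union_le p.support q.support
    omega
  have hkey := key_lemma r.support x (hinj.injOn) r.coeff hcard hvan
  obtain ⟨α₀, hα₀⟩ := Finset.nonempty_iff_ne_empty.2
    (fun he => hrne (support_eq_empty.1 he))
  exact mem_support_iff.1 hα₀ (hkey α₀ hα₀)
end
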